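/- arXiv:1402.7000 — 4 statements merged into one kernel-verified Lean document; each statement's English description precedes it below -/
import Mathlib

section
/- Let τ be a complex number with strictly positive imaginary part, let n be a natural number and let k be an integer. Then the sum over all nonzero lattice points vanishes: ∑'_{(a,b) ∈ ℤ×ℤ, (a,b) ≠ (0,0)} (aτ + b)^{-k} · (a·conj(τ) + b)^{-(2n+1-k)} = 0, where the powers are integer (zpow) powers in ℂ, conj denotes complex conjugation, and ∑' denotes the topological tsum over the subtype of nonzero pairs. (The sum vanishes because the summand is odd under (a,b) ↦ (−a,−b), the total weight 2n+1 being odd.) -/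
/-! Negation `(a, b) ↦ (-a, -b)` permutes `ℤ² ∖ {0}` and flips the sign of the summand, since the
total weight `2n + 1` is odd. A `tsum` invariant under reindexing and equal to its own negative is
zero; no convergence is needed, because a non-summable family has `tsum` zero anyway. -/

theorem tsum_eq_zero_of_comp_equiv_eq_neg {β G : Type*} [AddCommGroup G] [TopologicalSpace G]
    [IsTopologicalAddGroup G] [T2Space G] [IsAddTorsionFree G] {f : β → G} (e : β ≃ β)
    (hf : ∀ b, f (e b) = -f b) : ∑' b, f b = 0 :=
  self_eq_neg.mp <| calc
    ∑' b, f b = ∑' b, f (e b) := (e.tsum_eq f).symm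
    _ = ∑' b, -f b := tsum_congr hf
    _ = -∑' b, f b := tsum_neg

theorem neg_zpow_mul_neg_zpow_of_odd_add {K : Type*} [DivisionRing K] (a b : K) {m n : ℤ}
    (h : Odd (m + n)) : (-a) ^ m * (-b) ^ n = -(a ^ m * b ^ n) := by
  rcases Int.even_or_odd m with hm | hm
  · have hn : Odd n := by simpa using h.sub_even hm
    rw [hm.neg_zpow, hn.neg_zpow, mul_neg]
  · have hn : Even n := by simpa using h.sub_odd hm
    rw [hm.neg_zpow, hn.neg_zpow, neg_mul]

theorem elliptic_odd_wheel_sum_vanishes_general (τ : ℂ) (n : ℕ) (k : ℤ) :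
    ∑' p : {p : ℤ × ℤ // p ≠ 0},
      ((p.1.1 : ℂ) * τ + (p.1.2 : ℂ)) ^ (-k) *
        ((p.1.1 : ℂ) * (starRingEnd ℂ τ) + (p.1.2 : ℂ)) ^ (-(2 * (n : ℤ) + 1 - k)) = 0 := by
  refine tsum_eq_zero_of_comp_equiv_eq_neg
    ((Equiv.neg (ℤ × ℤ)).subtypeEquiv fun _ => by simp) fun p => ?_
  have hodd : Odd (-k + -(2 * (n : ℤ) + 1 - k)) := ⟨-n - 1, by ring⟩
  simp only [Equiv.subtypeEquiv_apply, Equiv.neg_apply, Prod.fst_neg, Prod.snd_neg, Int.cast_neg,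
    neg_mul, ← neg_add]
  exact neg_zpow_mul_neg_zpow_of_odd_add _ _ hodd

/-- The lattice sum `∑_{(a,b) ∈ ℤ²∖{0}} (aτ+b)^{-k} (aτ̄+b)^{-(2n+1-k)}` vanishes
for `τ` in the upper half plane, since the summand is odd under `(a,b) ↦ (-a,-b)`. -/
theorem elliptic_odd_wheel_sum_vanishes (τ : ℂ) (hτ : 0 < τ.im) (n : ℕ) (k : ℤ) :
    ∑' p : {p : ℤ × ℤ // p ≠ 0},
      ((p.1.1 : ℂ) * τ + (p.1.2 : ℂ)) ^ (-k) *
        ((p.1.1 : ℂ) * (starRingEnd ℂ τ) + (p.1.2 : ℂ)) ^ (-(2 * (n : ℤ) + 1 - k)) = 0 :=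
  elliptic_odd_wheel_sum_vanishes_general τ n k
end

section
/- Let n ≥ 1, let t : Fin n → ℝ with t i > 0 for all i, and let ε > 0. Define the n×n real matrix M(t,ε) := (1/4) • A(t,ε), where A(t,ε) i j = 1/ε + (if i = j then 1/(t i) else 0). Then M(t,ε) is invertible and every entry of its inverse satisfies the bound |(M(t,ε)⁻¹) i j| ≤ 4 · min (t i) (t j). -/
/-!
The matrix `A = diag(1/tᵢ) + (1/ε)·𝟙𝟙ᵀ` is a rank-one perturbation of a diagonal matrix, so by
Sherman–Morrison its inverse is `diag(tᵢ) - t tᵀ / (ε + ∑ₖ tₖ)`, and `M⁻¹ = 4 A⁻¹`. For positive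
data the correction `tᵢ tⱼ / (ε + ∑ₖ tₖ)` lies between `0` and `min tᵢ tⱼ`, because
`tᵢ tⱼ = min tᵢ tⱼ * max tᵢ tⱼ` and `max tᵢ tⱼ ≤ ε + ∑ₖ tₖ`; this gives the entrywise bound.
-/

open Matrix Finset

section FeynmanMatrix

variable {ι K : Type*} [Fintype ι] [DecidableEq ι] [Field K]

def feynmanMatrix (t : ι → K) (ε : K) : Matrix ι ι K :=
  of fun i j => 1 / ε + if i = j then 1 / t i else 0

def feynmanMatrixInv (t : ι → K) (ε : K) : Matrix ι ι K :=
  of fun i j => (if i = j then t i else 0) - t i * t j / (ε + ∑ k, t k)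

theorem sum_feynmanMatrixInv_apply (t : ι → K) (ε : K) (j : ι) (h : ε + ∑ k, t k ≠ 0) :
    ∑ k, feynmanMatrixInv t ε k j = ε * t j / (ε + ∑ k, t k) := by
  simp only [feynmanMatrixInv, of_apply, sum_sub_distrib, sum_ite_eq', mem_univ, if_true,
    ← sum_div, ← sum_mul]
  field_simp
  ring

theorem feynmanMatrix_mul_feynmanMatrixInv {t : ι → K} {ε : K} (ht : ∀ i, t i ≠ 0) (hε : ε ≠ 0)
    (h : ε + ∑ k, t k ≠ 0) : feynmanMatrix t ε * feynmanMatrixInv t ε = 1 := by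
  ext i j
  have hrow : (feynmanMatrix t ε * feynmanMatrixInv t ε) i j
      = 1 / ε * ∑ k, feynmanMatrixInv t ε k j + 1 / t i * feynmanMatrixInv t ε i j := by
    simp only [mul_apply, feynmanMatrix, of_apply, add_mul, sum_add_distrib, ← mul_sum, ite_mul,
      zero_mul, sum_ite_eq, mem_univ, if_true]
  rw [hrow, sum_feynmanMatrixInv_apply t ε j h, one_apply]
  have hti := ht i
  by_cases hij : i = j
  · subst hij; simp only [feynmanMatrixInv, of_apply, if_true]; field_simp; ring
  · simp only [feynmanMatrixInv, of_apply, if_neg hij]; field_simp; ring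

theorem abs_feynmanMatrixInv_apply_le {t : ι → ℝ} {ε : ℝ} (ht : ∀ i, 0 < t i) (hε : 0 ≤ ε)
    (i j : ι) : |feynmanMatrixInv t ε i j| ≤ min (t i) (t j) := by
  set S := ε + ∑ k, t k
  have hle : ∀ k, t k ≤ S := fun k => by
    have := single_le_sum (fun k _ => (ht k).le) (mem_univ k); linarith
  have hS : 0 < S := (ht i).trans_le (hle i)
  have hcorr_nonneg : 0 ≤ t i * t j / S := by have := ht i; have := ht j; positivity
  have hcorr_le : t i * t j / S ≤ min (t i) (t j) := by
    rw [div_le_iff₀ hS, ← min_mul_max (t i) (t j)]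
    exact mul_le_mul_of_nonneg_left (max_le (hle i) (hle j)) (le_min (ht i).le (ht j).le)
  simp only [feynmanMatrixInv, of_apply]
  split_ifs with hij
  · subst hij
    rw [min_self] at hcorr_le ⊢
    rw [abs_le]; constructor <;> linarith
  · rwa [zero_sub, abs_neg, abs_of_nonneg hcorr_nonneg]

end FeynmanMatrix

theorem inverse_feynman_matrix_entry_bound_general (n : ℕ) (t : Fin n → ℝ)
    (ht : ∀ i, 0 < t i) (ε : ℝ) (hε : 0 < ε) :
    IsUnit ((1 / 4 : ℝ) • Matrix.of fun i j : Fin n => 1 / ε + if i = j then 1 / t i else 0) ∧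
    ∀ i j : Fin n,
      |((1 / 4 : ℝ) • Matrix.of fun i j : Fin n =>
          1 / ε + if i = j then 1 / t i else 0)⁻¹ i j| ≤ 4 * min (t i) (t j) := by
  have hsum : 0 < ε + ∑ k, t k := add_pos_of_pos_of_nonneg hε (sum_nonneg fun k _ => (ht k).le)
  have hright : ((1 / 4 : ℝ) • feynmanMatrix t ε) * ((4 : ℝ) • feynmanMatrixInv t ε) = 1 := by
    rw [smul_mul_smul_comm,
      feynmanMatrix_mul_feynmanMatrixInv (fun i => (ht i).ne') hε.ne' hsum.ne']
    norm_num
  refine ⟨(isUnit_iff_isUnit_det _).mpr (isUnit_det_of_right_inverse hright), fun i j => ?_⟩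
  change |(((1 / 4 : ℝ) • feynmanMatrix t ε)⁻¹ i j)| ≤ _
  rw [inv_eq_right_inv hright, Matrix.smul_apply, smul_eq_mul, abs_mul, abs_of_pos four_pos]
  exact mul_le_mul_of_nonneg_left (abs_feynmanMatrixInv_apply_le ht hε.le i j) zero_le_four

/-- Lemma C.1 of the paper: for `M(t,ε) = (1/4)·A(t,ε)` with
`A(t,ε) i j = 1/ε + δᵢⱼ/tᵢ`, the matrix `M(t,ε)` is invertible and
`|(M⁻¹) i j| ≤ 4·min(tᵢ,tⱼ)`. -/
theorem inverse_feynman_matrix_entry_bound (n : ℕ) (hn : 1 ≤ n) (t : Fin n → ℝ)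
    (ht : ∀ i, 0 < t i) (ε : ℝ) (hε : 0 < ε) :
    IsUnit ((1 / 4 : ℝ) • Matrix.of fun i j : Fin n => 1 / ε + if i = j then 1 / t i else 0) ∧
    ∀ i j : Fin n,
      |((1 / 4 : ℝ) • Matrix.of fun i j : Fin n =>
          1 / ε + if i = j then 1 / t i else 0)⁻¹ i j| ≤ 4 * min (t i) (t j) :=
  inverse_feynman_matrix_entry_bound_general n t ht ε hε
end

section
/- Let n ≥ 3 be a natural number and L > 0. The function t ↦ (∏_{i=1}^{n-1} t_i^{-1/2}) · t_n^{-3/2} is Lebesgue integrable on the ordered simplex {t ∈ ℝⁿ : 0 < t₁ ≤ t₂ ≤ ⋯ ≤ t_n ≤ L}. (Equivalently, the integral ∫_{ε ≤ t₁ ≤ ⋯ ≤ t_n ≤ L} (∏_{i=1}^{n-1} t_i^{-1/2}) t_n^{-3/2} dt₁⋯dt_n converges as ε → 0 for n ≥ 3.) -/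
/-!
The total exponent `-(n-1)/2 - 3/2 = -(n+2)/2` is spread evenly over the `n` coordinates:
on the ordered simplex the integrand is dominated by `∏ i, tᵢ ^ c` with `c = -1/2 - 1/n`,
because raising the exponent of a smaller coordinate and lowering that of the largest one by
the same total only increases the product. For `n ≥ 3` we have `c > -1`, so the dominating
product is integrable on the box `(0, L]ⁿ` by Fubini.
-/

open MeasureTheory Set Real

theorem integrableOn_univ_pi_prod {ι 𝕜 E : Type*} [Fintype ι] [NormedCommRing 𝕜]
    [MeasurableSpace E] {μ : ι → Measure E} [∀ i, SigmaFinite (μ i)] {f : ι → E → 𝕜}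
    {s : ι → Set E} (hf : ∀ i, IntegrableOn (f i) (s i) (μ i)) :
    IntegrableOn (fun x : ι → E => ∏ i, f i (x i)) (univ.pi s) (Measure.pi μ) := by
  rw [IntegrableOn, Measure.restrict_pi_pi]
  exact Integrable.fintype_prod hf

theorem integrableOn_univ_pi_prod_rpow {ι : Type*} [Fintype ι] {c : ℝ} (hc : -1 < c) (L : ℝ) :
    IntegrableOn (fun t : ι → ℝ => ∏ i, t i ^ c) (univ.pi fun _ => Ioc 0 L) :=
  integrableOn_univ_pi_prod fun _ =>
    (intervalIntegral.intervalIntegrable_rpow' hc).def'.mono_set Ioc_subset_uIoc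

theorem measurableSet_setOf_monotone {ι : Type*} [Preorder ι] [Countable ι] :
    MeasurableSet {t : ι → ℝ | Monotone t} := by
  simp only [Monotone, ofPred_forall]
  refine .iInter fun i => .iInter fun j => ?_
  by_cases hij : i ≤ j
  · simpa [hij] using measurableSet_le (measurable_pi_apply i) (measurable_pi_apply j)
  · simp [hij]

theorem prod_erase_rpow_mul_rpow_le {ι : Type*} [Fintype ι] [DecidableEq ι] {t : ι → ℝ}
    {l : ι} (ht : ∀ i, 0 < t i) (hl : ∀ i, t i ≤ t l) (c : ℝ) {d : ℝ} (hd : 0 ≤ d) :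
    (∏ i ∈ Finset.univ.erase l, t i ^ (c + d)) * t l ^ (c - (Fintype.card ι - 1) * d) ≤
      ∏ i, t i ^ c := by
  have hcard : ((Finset.univ.erase l).card : ℝ) = Fintype.card ι - 1 := by
    rw [Finset.card_erase_of_mem (Finset.mem_univ l), Finset.card_univ,
      Nat.cast_pred (Fintype.card_pos_iff.2 ⟨l⟩)]
  have hshift : ∏ i ∈ Finset.univ.erase l, t i ^ d ≤ t l ^ ((Fintype.card ι - 1) * d) := by
    calc ∏ i ∈ Finset.univ.erase l, t i ^ d
        ≤ ∏ _i ∈ Finset.univ.erase l, t l ^ d :=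
          Finset.prod_le_prod (fun i _ => (rpow_pos_of_pos (ht i) d).le)
            fun i _ => rpow_le_rpow (ht i).le (hl i) hd
      _ = t l ^ ((Fintype.card ι - 1) * d) := by
          rw [Finset.prod_const, ← rpow_natCast, ← rpow_mul (ht l).le, hcard, mul_comm]
  calc (∏ i ∈ Finset.univ.erase l, t i ^ (c + d)) * t l ^ (c - (Fintype.card ι - 1) * d)
      = (∏ i ∈ Finset.univ.erase l, t i ^ c) * (∏ i ∈ Finset.univ.erase l, t i ^ d) *
          (t l ^ c / t l ^ ((Fintype.card ι - 1) * d)) := by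
        rw [← Finset.prod_mul_distrib, rpow_sub (ht l)]
        simp only [rpow_add (ht _)]
    _ ≤ (∏ i ∈ Finset.univ.erase l, t i ^ c) * t l ^ ((Fintype.card ι - 1) * d) *
          (t l ^ c / t l ^ ((Fintype.card ι - 1) * d)) := by
        gcongr
        · exact div_nonneg (rpow_pos_of_pos (ht l) c).le (rpow_pos_of_pos (ht l) _).le
        · exact Finset.prod_nonneg fun i _ => (rpow_pos_of_pos (ht i) c).le
    _ = ∏ i, t i ^ c := by
        rw [← Finset.prod_erase_mul _ _ (Finset.mem_univ l), mul_assoc _ (t l ^ _), mul_div_cancel₀ _ (rpow_pos_of_pos (ht l) _).ne']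

theorem norm_prod_erase_rpow_mul_rpow_le {n : ℕ} {t : Fin n → ℝ} {l : Fin n}
    (ht : ∀ i, 0 < t i) (hl : ∀ i, t i ≤ t l) :
    ‖(∏ i ∈ Finset.univ.erase l, t i ^ (-(1 : ℝ) / 2)) * t l ^ (-(3 : ℝ) / 2)‖ ≤
      ∏ i, t i ^ (-1 / 2 - 1 / (n : ℝ)) := by
  have hn : (n : ℝ) ≠ 0 := Nat.cast_ne_zero.2 l.pos.ne'
  have key := prod_erase_rpow_mul_rpow_le ht hl (-1 / 2 - 1 / n) (d := 1 / n) (by positivity)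
  have hexp₁ : -1 / 2 - 1 / (n : ℝ) + 1 / n = -(1 : ℝ) / 2 := by ring
  have hexp₂ : -1 / 2 - 1 / (n : ℝ) - (n - 1) * (1 / n) = -(3 : ℝ) / 2 := by field_simp; ring
  rw [Fintype.card_fin, hexp₁, hexp₂] at key
  rwa [norm_of_nonneg (mul_nonneg (Finset.prod_nonneg fun i _ => (rpow_pos_of_pos (ht i) _).le)
    (rpow_pos_of_pos (ht l) _).le)]

/-- For `n ≥ 3`, the function `t ↦ (∏_{i<n-1} tᵢ^{-1/2}) · t_{n-1}^{-3/2}` is Lebesgue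
integrable on the ordered simplex `{0 < t₀ ≤ t₁ ≤ ⋯ ≤ t_{n-1} ≤ L}`. -/
theorem integrable_wheel_time_integral (n : ℕ) (hn : 3 ≤ n) (L : ℝ) :
    IntegrableOn
      (fun t : Fin n → ℝ =>
        (∏ i ∈ Finset.univ.erase (⟨n - 1, by omega⟩ : Fin n), t i ^ (-(1 : ℝ) / 2)) *
          t (⟨n - 1, by omega⟩ : Fin n) ^ (-(3 : ℝ) / 2))
      {t : Fin n → ℝ | 0 < t (⟨0, by omega⟩ : Fin n) ∧ (∀ i j, i ≤ j → t i ≤ t j) ∧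
        t (⟨n - 1, by omega⟩ : Fin n) ≤ L} := by
  set l : Fin n := ⟨n - 1, by omega⟩
  set S := {t : Fin n → ℝ | 0 < t ⟨0, by omega⟩ ∧ (∀ i j, i ≤ j → t i ≤ t j) ∧ t l ≤ L}
  have hS : MeasurableSet S :=
    (measurableSet_lt measurable_const (measurable_pi_apply _)).inter
      (measurableSet_setOf_monotone.inter
        (measurableSet_le (measurable_pi_apply l) measurable_const))
  have hpos : ∀ t ∈ S, ∀ i, 0 < t i := fun t ht i =>
    ht.1.trans_le (ht.2.1 _ i (Fin.le_def.2 (Nat.zero_le _)))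
  have hle : ∀ t ∈ S, ∀ i, t i ≤ t l := fun t ht i =>
    ht.2.1 i l (Fin.le_def.2 (by simp only [l]; omega))
  have hSbox : S ⊆ univ.pi fun _ => Ioc 0 L := fun t ht i _ =>
    ⟨hpos t ht i, (hle t ht i).trans ht.2.2⟩
  have hc : -1 < -1 / 2 - 1 / (n : ℝ) := by
    have hn' : (3 : ℝ) ≤ n := by exact_mod_cast hn
    have : 1 / (n : ℝ) < 1 / 2 := by rw [div_lt_div_iff₀] <;> linarith
    linarith
  exact ((integrableOn_univ_pi_prod_rpow hc L).mono_set hSbox).mono' (by fun_prop)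
    ((ae_restrict_iff' hS).2 (.of_forall fun t ht =>
      norm_prod_erase_rpow_mul_rpow_le (hpos t ht) (hle t ht)))
end

section
/- Fix n ≥ 1, and let P := MvPolynomial (Fin n) ℂ ⊗[ℂ] ExteriorAlgebra ℂ (Fin n → ℂ). Let Δ : P →ₗ[ℂ] P be the 'BV Laplacian' Δ = ∑_{i} (∂/∂xᵢ) ⊗ ι(eᵢ*), where ∂/∂xᵢ is the i-th partial derivative on polynomials (MvPolynomial.pderiv i) and ι(eᵢ*) is left contraction of the exterior algebra with the i-th coordinate functional eᵢ* (the dual of the i-th standard basis vector e_i of ℂⁿ). Then: (1) Δ ∘ Δ = 0; (2) the kernel of Δ equals the span of the single element 1 ⊗ (e₁ ∧ e₂ ∧ ⋯ ∧ e_n) together with the range of Δ, i.e. ker Δ = range Δ ⊔ ℂ·(1 ⊗ e₁∧⋯∧e_n); and (3) 1 ⊗ (e₁∧⋯∧e_n) does not lie in the range of Δ. Consequently the cohomology ker Δ / im Δ is one-dimensional, spanned by the class of the top exterior monomial 1 ⊗ e₁∧⋯∧e_n. -/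
/-!
The homotopy `h = ∑ᵢ xᵢ ⊗ (eᵢ ∧ ·)` satisfies `Δh + hΔ = N`, where `N` multiplies the basis vector
`xᵃ ⊗ e_S` by `|a| + n - |S|`, a weight that vanishes only for `1 ⊗ e₁ ∧ ⋯ ∧ eₙ`. Since `Δ² = 0`,
`Δ` commutes with `N`, hence with the operators `G` and `P` that invert `N` off its kernel and
project onto its kernel. A cocycle `v` therefore splits as `v = Δ(hGv) + Pv`, while a coboundary
`Δu` in the kernel of `N` equals `PΔu = ΔPu = 0`.
-/

open TensorProduct

/-- The BV Laplacian `Δ = ∑ᵢ (∂/∂xᵢ) ⊗ ι(eᵢ*)` on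
`ℂ[x₁,…,xₙ] ⊗ Λ*(ℂⁿ)`, where `∂/∂xᵢ` is the `i`-th partial derivative on polynomials and
`ι(eᵢ*)` is left contraction of the exterior algebra by the `i`-th coordinate functional. -/
noncomputable def bvLaplacian (n : ℕ) :
    (MvPolynomial (Fin n) ℂ ⊗[ℂ] ExteriorAlgebra ℂ (Fin n → ℂ)) →ₗ[ℂ]
      (MvPolynomial (Fin n) ℂ ⊗[ℂ] ExteriorAlgebra ℂ (Fin n → ℂ)) :=
  ∑ i : Fin n,
    TensorProduct.map (MvPolynomial.pderiv (R := ℂ) i).toLinearMap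
      (CliffordAlgebra.contractLeft (Q := (0 : QuadraticForm ℂ (Fin n → ℂ)))
        (LinearMap.proj i))

/-- The top exterior monomial `e₁ ∧ e₂ ∧ ⋯ ∧ eₙ` in `Λ*(ℂⁿ)`. -/
noncomputable def topExteriorMonomial (n : ℕ) : ExteriorAlgebra ℂ (Fin n → ℂ) :=
  (List.ofFn fun i : Fin n => ExteriorAlgebra.ι ℂ (Pi.single i (1 : ℂ))).prod

lemma commute_mul_add_mul_of_mul_self_eq_zero {A : Type*} [NonUnitalRing A] {d : A}
    (hd : d * d = 0) (h : A) : Commute d (d * h + h * d) := by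
  rw [Commute, SemiconjBy, mul_add, add_mul, ← mul_assoc, hd, mul_assoc, mul_assoc, hd,
    zero_mul, mul_zero, zero_add, add_zero]

namespace Module.Basis

section CommRing

variable {ι R V : Type*} [CommRing R] [AddCommGroup V] [Module R V] (b : Basis ι R V)

noncomputable def diagonalMap (μ : ι → R) : Module.End R V :=
  b.constr R fun i => μ i • b i

@[simp]
lemma diagonalMap_apply_self (μ : ι → R) (i : ι) : b.diagonalMap μ (b i) = μ i • b i :=
  b.constr_basis R _ i

lemma repr_diagonalMap (μ : ι → R) (x : V) (j : ι) :
    b.repr (b.diagonalMap μ x) j = μ j * b.repr x j := by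
  have : b.coord j ∘ₗ b.diagonalMap μ = μ j • b.coord j :=
    b.ext fun i => by classical rcases eq_or_ne i j with rfl | hij <;> simp [*]
  simpa using congr($this x)

lemma range_diagonalMap_indicator_le [DecidableEq R] (μ : ι → R) :
    LinearMap.range (b.diagonalMap ((fun c => if c = 0 then 1 else 0) ∘ μ)) ≤
      Submodule.span R (b '' {i | μ i = 0}) := by
  rw [diagonalMap, constr_range, Submodule.span_le]
  rintro _ ⟨i, rfl⟩
  by_cases hi : μ i = 0
  · simpa [hi] using Submodule.subset_span (R := R) (Set.mem_image_of_mem b hi)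
  · simp [hi]

variable [IsDomain R]

lemma diagonalMap_comp_apply_of_eq_smul {μ : ι → R} {x : V} {c : R}
    (hx : b.diagonalMap μ x = c • x) (f : R → R) : b.diagonalMap (f ∘ μ) x = f c • x := by
  refine b.ext_elem fun j => ?_
  have hj := congr(b.repr $hx j)
  rw [repr_diagonalMap, map_smul, Finsupp.smul_apply, smul_eq_mul] at hj
  rw [repr_diagonalMap, map_smul, Finsupp.smul_apply, smul_eq_mul, Function.comp_apply]
  rcases eq_or_ne (b.repr x j) 0 with h0 | h0
  · simp [h0]
  · rw [mul_right_cancel₀ h0 hj]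

lemma commute_diagonalMap_comp {μ : ι → R} {T : Module.End R V}
    (hT : Commute T (b.diagonalMap μ)) (f : R → R) : Commute T (b.diagonalMap (f ∘ μ)) := by
  refine b.ext fun i => ?_
  have hTi : b.diagonalMap μ (T (b i)) = μ i • T (b i) := by
    rw [← Module.End.mul_apply, ← hT.eq, Module.End.mul_apply, diagonalMap_apply_self, map_smul]
  rw [Module.End.mul_apply, Module.End.mul_apply, diagonalMap_apply_self, map_smul,
    b.diagonalMap_comp_apply_of_eq_smul hTi, Function.comp_apply]

end CommRing

variable {ι K V : Type*} [Field K] [AddCommGroup V] [Module K V] {b : Basis ι K V}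
  {d h : Module.End K V} {μ : ι → K}

theorem ker_eq_range_sup_span_of_homotopy (hd : d * d = 0) (hN : d * h + h * d = b.diagonalMap μ)
    (hd₀ : ∀ i, μ i = 0 → d (b i) = 0) :
    LinearMap.ker d = LinearMap.range d ⊔ Submodule.span K (b '' {i | μ i = 0}) := by
  classical
  -- Since `0⁻¹ = 0`, `G` inverts `N = dh + hd` exactly off its kernel.
  set G := b.diagonalMap (Inv.inv ∘ μ)
  set P := b.diagonalMap ((fun c => if c = 0 then 1 else 0) ∘ μ)
  have hdG : Commute d G :=
    b.commute_diagonalMap_comp (hN ▸ commute_mul_add_mul_of_mul_self_eq_zero hd h) _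
  have hNGP : b.diagonalMap μ * G + P = 1 := b.ext fun i => by
    by_cases hi : μ i = 0 <;> simp [G, P, hi, smul_smul]
  refine le_antisymm (fun v hv => ?_) (sup_le (LinearMap.range_le_ker_iff.2 hd) ?_)
  · have hv : v = d (h (G v)) + P v := by
      calc v = (b.diagonalMap μ * G + P) v := by rw [hNGP, Module.End.one_apply]
        _ = d (h (G v)) + h (G (d v)) + P v := by
          rw [← hN, add_mul, mul_assoc, mul_assoc, hdG.eq]; rfl
        _ = d (h (G v)) + P v := by rw [LinearMap.mem_ker.1 hv, map_zero, map_zero, add_zero]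
    rw [hv]
    exact Submodule.add_mem_sup (LinearMap.mem_range_self _ _)
      (b.range_diagonalMap_indicator_le μ (LinearMap.mem_range_self _ _))
  · rw [Submodule.span_le]
    rintro _ ⟨i, hi, rfl⟩
    exact hd₀ i hi

theorem disjoint_range_span_of_homotopy (hd : d * d = 0) (hN : d * h + h * d = b.diagonalMap μ)
    (hd₀ : ∀ i, μ i = 0 → d (b i) = 0) :
    Disjoint (LinearMap.range d) (Submodule.span K (b '' {i | μ i = 0})) := by
  classical
  set P := b.diagonalMap ((fun c => if c = 0 then 1 else 0) ∘ μ)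
  have hdP : Commute d P :=
    b.commute_diagonalMap_comp (hN ▸ commute_mul_add_mul_of_mul_self_eq_zero hd h) _
  have hfix : Submodule.span K (b '' {i | μ i = 0}) ≤ LinearMap.eqLocus P LinearMap.id := by
    rw [Submodule.span_le]
    rintro _ ⟨i, hi, rfl⟩
    simp [P, show μ i = 0 from hi]
  have hker : Submodule.span K (b '' {i | μ i = 0}) ≤ LinearMap.ker d := by
    rw [Submodule.span_le]
    rintro _ ⟨i, hi, rfl⟩
    exact hd₀ i hi
  rw [Submodule.disjoint_def]
  rintro _ ⟨u, rfl⟩ hu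
  calc d u = P (d u) := (hfix hu).symm
    _ = d (P u) := congr($hdP.eq u).symm
    _ = 0 := hker (b.range_diagonalMap_indicator_le μ (LinearMap.mem_range_self _ _))

end Module.Basis

lemma Fintype.sum_sum_eq_zero_of_antisymm {ι M : Type*} [Fintype ι] [AddCommMonoid M]
    {F : ι → ι → M} (hF : ∀ i j, F i j + F j i = 0) (hF₀ : ∀ i, F i i = 0) :
    ∑ i, ∑ j, F i j = 0 := by
  rw [← Fintype.sum_prod_type']
  refine Finset.sum_ninvolution Prod.swap (fun _ => hF _ _) (fun a ha hswap => ha ?_)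
    (fun _ => Finset.mem_univ _) Prod.swap_swap
  rw [← Prod.fst_swap (p := a), hswap]
  exact hF₀ _

namespace ExteriorAlgebra

variable {R M I : Type*} [CommRing R] [AddCommGroup M] [Module R M] [Fintype I]
  {e : I → M} {ε : I → Module.Dual R M}

lemma sum_ι_mul_contractLeft_ι_mul (he : ∀ v, ∑ i, ε i v • e i = v) (v : M)
    (x : ExteriorAlgebra R M) :
    ∑ i, ι R (e i) * CliffordAlgebra.contractLeft (ε i) (ι R v * x) =
      ι R v * x + ι R v * ∑ i, ι R (e i) * CliffordAlgebra.contractLeft (ε i) x := by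
  have hterm : ∀ i, ι R (e i) * CliffordAlgebra.contractLeft (ε i) (ι R v * x) =
      ι R (ε i v • e i) * x + ι R v * (ι R (e i) * CliffordAlgebra.contractLeft (ε i) x) := by
    intro i
    rw [CliffordAlgebra.contractLeft_ι_mul, mul_sub, ← mul_assoc, ← mul_assoc,
      eq_neg_of_add_eq_zero_left (ι_add_mul_swap (e i) v), map_smul, mul_smul_comm, smul_mul_assoc]
    simp [sub_eq_add_neg]
  rw [Finset.sum_congr rfl fun i _ => hterm i, Finset.sum_add_distrib, ← Finset.sum_mul,
    ← Finset.mul_sum, ← map_sum, he]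

lemma sum_ι_mul_contractLeft_ιMulti (he : ∀ v, ∑ i, ε i v • e i = v) {m : ℕ} (v : Fin m → M) :
    ∑ i, ι R (e i) * CliffordAlgebra.contractLeft (ε i) (ιMulti R m v) = m • ιMulti R m v := by
  induction m with
  | zero => simp [CliffordAlgebra.contractLeft_one]
  | succ m ih =>
    rw [ιMulti_succ_apply, sum_ι_mul_contractLeft_ι_mul he, ih, mul_smul_comm, succ_nsmul']

lemma sum_ι_mul_contractLeft_basis (he : ∀ v, ∑ i, ε i v • e i = v) {J : Type*} [LinearOrder J]
    (b : Module.Basis J R M) (s : Finset J) :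
    ∑ i, ι R (e i) * CliffordAlgebra.contractLeft (ε i) (b.ExteriorAlgebra s) =
      s.card • b.ExteriorAlgebra s := by
  rw [basis_apply]
  exact sum_ι_mul_contractLeft_ιMulti he _

end ExteriorAlgebra

open MvPolynomial ExteriorAlgebra

lemma MvPolynomial.pderiv_pderiv_comm {R σ : Type*} [CommRing R] (i j : σ) (p : MvPolynomial σ R) :
    pderiv i (pderiv j p) = pderiv j (pderiv i p) := by
  classical
  have h : ⁅pderiv i, pderiv j⁆ = (0 : Derivation R (MvPolynomial σ R) (MvPolynomial σ R)) :=
    derivation_ext fun k => by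
      rw [Derivation.commutator_apply, pderiv_X, pderiv_X, Pi.single_apply, Pi.single_apply]
      split_ifs <;> simp
  simpa [Derivation.commutator_apply, sub_eq_zero] using congr($h p)

section bvLaplacian

variable {n : ℕ}

noncomputable def bvHomotopy (n : ℕ) :
    Module.End ℂ (MvPolynomial (Fin n) ℂ ⊗[ℂ] ExteriorAlgebra ℂ (Fin n → ℂ)) :=
  ∑ i : Fin n, TensorProduct.map (LinearMap.mulLeft ℂ (X i))
    (LinearMap.mulLeft ℂ (ι ℂ (Pi.single i (1 : ℂ))))

noncomputable def bvBasis (n : ℕ) :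
    Module.Basis ((Fin n →₀ ℕ) × Finset (Fin n)) ℂ
      (MvPolynomial (Fin n) ℂ ⊗[ℂ] ExteriorAlgebra ℂ (Fin n → ℂ)) :=
  (basisMonomials (Fin n) ℂ).tensorProduct (Pi.basisFun ℂ (Fin n)).ExteriorAlgebra

noncomputable def bvWeight (n : ℕ) (q : (Fin n →₀ ℕ) × Finset (Fin n)) : ℂ :=
  q.1.degree + n - q.2.card

lemma bvLaplacian_tmul (p : MvPolynomial (Fin n) ℂ) (x : ExteriorAlgebra ℂ (Fin n → ℂ)) :
    bvLaplacian n (p ⊗ₜ[ℂ] x) =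
      ∑ i, pderiv i p ⊗ₜ[ℂ] CliffordAlgebra.contractLeft (LinearMap.proj i) x := by
  rw [bvLaplacian, LinearMap.sum_apply]
  rfl

lemma bvHomotopy_tmul (p : MvPolynomial (Fin n) ℂ) (x : ExteriorAlgebra ℂ (Fin n → ℂ)) :
    bvHomotopy n (p ⊗ₜ[ℂ] x) = ∑ i, (X i * p) ⊗ₜ[ℂ] (ι ℂ (Pi.single i (1 : ℂ)) * x) := by
  rw [bvHomotopy, LinearMap.sum_apply]
  rfl

lemma bvLaplacian_mul_self : bvLaplacian n * bvLaplacian n = 0 := by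
  refine TensorProduct.ext' fun p x => ?_
  simp only [Module.End.mul_apply, bvLaplacian_tmul, map_sum, LinearMap.zero_apply]
  refine Fintype.sum_sum_eq_zero_of_antisymm (fun i j => ?_) fun i => ?_
  · rw [pderiv_pderiv_comm, CliffordAlgebra.contractLeft_comm, tmul_neg, neg_add_cancel]
  · rw [CliffordAlgebra.contractLeft_contractLeft, tmul_zero]

lemma bvLaplacian_mul_bvHomotopy_add_summand (i j : Fin n) (p : MvPolynomial (Fin n) ℂ)
    (x : ExteriorAlgebra ℂ (Fin n → ℂ)) :
    pderiv i (X j * p) ⊗ₜ[ℂ]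
          CliffordAlgebra.contractLeft (LinearMap.proj i) (ι ℂ (Pi.single j 1) * x) +
        (X j * pderiv i p) ⊗ₜ[ℂ]
          (ι ℂ (Pi.single j 1) * CliffordAlgebra.contractLeft (LinearMap.proj i) x) =
      if i = j then (X i * pderiv i p) ⊗ₜ[ℂ] x +
        p ⊗ₜ[ℂ] (x - ι ℂ (Pi.single i 1) * CliffordAlgebra.contractLeft (LinearMap.proj i) x)
      else 0 := by
  rw [pderiv_mul, pderiv_X, CliffordAlgebra.contractLeft_ι_mul, LinearMap.proj_apply]
  rcases eq_or_ne i j with rfl | hij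
  · rw [if_pos rfl, Pi.single_eq_same, Pi.single_eq_same, one_mul, one_smul, add_tmul, tmul_sub,
      tmul_sub]
    abel
  · rw [if_neg hij, Pi.single_eq_of_ne' hij, Pi.single_eq_of_ne hij, zero_mul, zero_add,
      zero_smul, zero_sub, tmul_neg, neg_add_cancel]

lemma bvLaplacian_mul_bvHomotopy_add_tmul (p : MvPolynomial (Fin n) ℂ)
    (x : ExteriorAlgebra ℂ (Fin n → ℂ)) :
    (bvLaplacian n * bvHomotopy n + bvHomotopy n * bvLaplacian n) (p ⊗ₜ[ℂ] x) =
      (∑ i, X i * pderiv i p) ⊗ₜ[ℂ] x + p ⊗ₜ[ℂ]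
        (n • x - ∑ i, ι ℂ (Pi.single i 1) * CliffordAlgebra.contractLeft (LinearMap.proj i) x) := by
  simp only [LinearMap.add_apply, Module.End.mul_apply, bvHomotopy_tmul, bvLaplacian_tmul, map_sum]
  rw [Finset.sum_comm, ← Finset.sum_add_distrib]
  simp_rw [← Finset.sum_add_distrib, bvLaplacian_mul_bvHomotopy_add_summand, Finset.sum_ite_eq,
    Finset.mem_univ, if_true]
  rw [Finset.sum_add_distrib, sum_tmul, ← tmul_sum, Finset.sum_sub_distrib, Finset.sum_const,
    Finset.card_univ, Fintype.card_fin]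

lemma bvLaplacian_mul_bvHomotopy_add :
    bvLaplacian n * bvHomotopy n + bvHomotopy n * bvLaplacian n =
      (bvBasis n).diagonalMap (bvWeight n) := by
  refine (bvBasis n).ext fun ⟨a, s⟩ => ?_
  have hpoly : ∑ i, X i * pderiv i (monomial a (1 : ℂ)) = a.degree • monomial a 1 :=
    (isHomogeneous_monomial 1 rfl).sum_X_mul_pderiv
  have hext := sum_ι_mul_contractLeft_basis (e := fun i => Pi.single i 1) (ε := LinearMap.proj)
    (fun v => by simpa using (Pi.basisFun ℂ (Fin n)).sum_repr v) (Pi.basisFun ℂ (Fin n)) s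
  rw [Module.Basis.diagonalMap_apply_self, bvBasis, Module.Basis.tensorProduct_apply,
    coe_basisMonomials, bvLaplacian_mul_bvHomotopy_add_tmul, hpoly, hext, bvWeight,
    ← Nat.cast_smul_eq_nsmul ℂ, ← Nat.cast_smul_eq_nsmul ℂ, ← Nat.cast_smul_eq_nsmul ℂ,
    ← sub_smul, ← smul_tmul', tmul_smul, ← add_smul, add_sub_assoc]

lemma bvWeight_eq_zero_iff {q : (Fin n →₀ ℕ) × Finset (Fin n)} :
    bvWeight n q = 0 ↔ q = (0, Finset.univ) := by
  obtain ⟨a, s⟩ := q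
  have hs : s.card ≤ n := by simpa using s.card_le_univ
  change (a.degree : ℂ) + n - s.card = 0 ↔ _
  rw [sub_eq_zero, ← Nat.cast_add, Nat.cast_inj, Prod.mk.injEq,
    ← Finsupp.degree_eq_zero_iff, ← Finset.card_eq_iff_eq_univ, Fintype.card_fin]
  omega

lemma bvBasis_zero_univ :
    bvBasis n (0, Finset.univ) = (1 : MvPolynomial (Fin n) ℂ) ⊗ₜ[ℂ] topExteriorMonomial n := by
  have : Finset.univ.orderEmbOfFin (Finset.card_fin n) = RelEmbedding.refl (· ≤ ·) :=
    (Finset.orderEmbOfFin_unique' _ fun _ => Finset.mem_univ _).symm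
  rw [bvBasis, Module.Basis.tensorProduct_apply, basis_apply_ofCard _ (Finset.card_fin n)]
  simp [Set.powersetCard.ofFinEmbEquiv_symm_apply, Set.powersetCard.ofCard, this, ιMulti_apply,
    topExteriorMonomial]

lemma bvLaplacian_one_tmul (x : ExteriorAlgebra ℂ (Fin n → ℂ)) :
    bvLaplacian n ((1 : MvPolynomial (Fin n) ℂ) ⊗ₜ[ℂ] x) = 0 := by
  simp [bvLaplacian_tmul]

end bvLaplacian

theorem bvLaplacian_cohomology_general (n : ℕ) :
    (bvLaplacian n).comp (bvLaplacian n) = 0 ∧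
    LinearMap.ker (bvLaplacian n)
      = LinearMap.range (bvLaplacian n) ⊔
          Submodule.span ℂ {(1 : MvPolynomial (Fin n) ℂ) ⊗ₜ[ℂ] topExteriorMonomial n} ∧
    (1 : MvPolynomial (Fin n) ℂ) ⊗ₜ[ℂ] topExteriorMonomial n ∉
      LinearMap.range (bvLaplacian n) := by
  have hd₀ : ∀ q, bvWeight n q = 0 → bvLaplacian n (bvBasis n q) = 0 := fun q hq => by
    rw [bvWeight_eq_zero_iff.1 hq, bvBasis_zero_univ, bvLaplacian_one_tmul]
  have hweight₀ : bvBasis n '' {q | bvWeight n q = 0} =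
      {(1 : MvPolynomial (Fin n) ℂ) ⊗ₜ[ℂ] topExteriorMonomial n} := by
    simp [bvWeight_eq_zero_iff, bvBasis_zero_univ]
  have hdisj := Module.Basis.disjoint_range_span_of_homotopy bvLaplacian_mul_self
    bvLaplacian_mul_bvHomotopy_add hd₀
  rw [hweight₀, Submodule.disjoint_span_singleton] at hdisj
  refine ⟨bvLaplacian_mul_self, ?_, fun h => ?_⟩
  · rw [← hweight₀]
    exact Module.Basis.ker_eq_range_sup_span_of_homotopy bvLaplacian_mul_self
      bvLaplacian_mul_bvHomotopy_add hd₀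
  · exact (bvBasis n).ne_zero (0, Finset.univ) (bvBasis_zero_univ ▸ hdisj h)

/-- Poincaré lemma (Lemma 4.12 of the paper): the BV Laplacian
`Δ = ∑ᵢ ∂/∂xᵢ ⊗ ι(eᵢ*)` squares to zero, its kernel is the sum of its range and the span of
`1 ⊗ e₁∧⋯∧eₙ`, and `1 ⊗ e₁∧⋯∧eₙ` is not in its range; hence
`H*(ℂ[xⁱ,ξᵢ], Δ) = ℂ·ξ₁∧⋯∧ξₙ`. -/
theorem bvLaplacian_cohomology (n : ℕ) (hn : 1 ≤ n) :
    (bvLaplacian n).comp (bvLaplacian n) = 0 ∧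
    LinearMap.ker (bvLaplacian n)
      = LinearMap.range (bvLaplacian n) ⊔
          Submodule.span ℂ {(1 : MvPolynomial (Fin n) ℂ) ⊗ₜ[ℂ] topExteriorMonomial n} ∧
    (1 : MvPolynomial (Fin n) ℂ) ⊗ₜ[ℂ] topExteriorMonomial n ∉
      LinearMap.range (bvLaplacian n) :=
  bvLaplacian_cohomology_general n
end
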